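/- arXiv:1403.0377 — 5 statements merged into one kernel-verified Lean document; each statement's English description precedes it below -/
import Mathlib

section
/- Let A be an m×m integer matrix whose characteristic polynomial is irreducible over ℚ. Then the entries of any nonzero eigenvector of A (over ℂ, or over ℚ(α) where α is an eigenvalue) are linearly independent over ℚ. -/
open Polynomial Matrix

lemma charpoly_transpose_aux {m : ℕ} (B : Matrix (Fin m) (Fin m) ℚ) :
    Bᵀ.charpoly = B.charpoly := by
  have h : Matrix.charmatrix Bᵀ = (Matrix.charmatrix B)ᵀ := by
    ext i j
    simp only [Matrix.charmatrix_apply, Matrix.transpose_apply, Matrix.diagonal_apply]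
    by_cases hij : i = j
    · subst hij; simp
    · simp [hij, Ne.symm hij]
  rw [Matrix.charpoly, Matrix.charpoly, h, Matrix.det_transpose]

/-- Entries of a nonzero eigenvector of an integer matrix with irreducible
characteristic polynomial are linearly independent over ℚ. -/
theorem stmt_0 {m : ℕ} (A : Matrix (Fin m) (Fin m) ℤ)
    (hirr : Irreducible ((A.map (Int.cast : ℤ → ℚ)).charpoly))
    (v : Fin m → ℂ) (hv : v ≠ 0) (α : ℂ)
    (heig : (A.map (Int.cast : ℤ → ℂ)).mulVec v = α • v) :
    LinearIndependent ℚ v := by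
  classical
  set B : Matrix (Fin m) (Fin m) ℚ := A.map (Int.cast : ℤ → ℚ) with hBdef
  let φ : (Fin m → ℚ) →ₗ[ℚ] ℂ :=
    { toFun := fun c => ∑ i, (c i : ℂ) * v i
      map_add' := by
        intro x y
        simp [add_mul, Finset.sum_add_distrib]
      map_smul' := by
        intro r x
        simp [Finset.mul_sum, Rat.smul_def, mul_assoc] }
  have hφ : ∀ c : Fin m → ℚ, φ c = ∑ i, (c i : ℂ) * v i := fun _ => rfl
  let f : Module.End ℚ (Fin m → ℚ) := Matrix.toLinAlgEquiv' Bᵀ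
  have hf : ∀ c, f c = Bᵀ.mulVec c := fun _ => rfl
  have hrow : ∀ i, ∑ j, (B i j : ℂ) * v j = α * v i := by
    intro i
    have h1 := congrFun heig i
    simp only [Matrix.mulVec, dotProduct, Matrix.map_apply, Pi.smul_apply,
      smul_eq_mul] at h1
    rw [← h1]
    apply Finset.sum_congr rfl
    intro j _
    push_cast [hBdef, Matrix.map_apply]
    ring
  have key : ∀ c : Fin m → ℚ, φ (f c) = α * φ c := by
    intro c
    rw [hφ, hφ, Finset.mul_sum]
    calc ∑ j, ((f c) j : ℂ) * v j
        = ∑ j, ∑ i, (c i : ℂ) * ((B i j : ℂ) * v j) := by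
          apply Finset.sum_congr rfl; intro j _
          rw [hf, Matrix.mulVec, dotProduct]
          push_cast
          rw [Finset.sum_mul]
          apply Finset.sum_congr rfl; intro i _
          simp only [Matrix.transpose_apply]
          ring
      _ = ∑ i, (c i : ℂ) * ∑ j, (B i j : ℂ) * v j := by
          rw [Finset.sum_comm]
          simp [Finset.mul_sum]
      _ = ∑ i, α * ((c i : ℂ) * v i) := by
          apply Finset.sum_congr rfl; intro i _
          rw [hrow]; ring
  -- kernel of φ is invariant under f
  have hinv : ∀ c ∈ LinearMap.ker φ, f c ∈ LinearMap.ker φ := by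
    intro c hc
    rw [LinearMap.mem_ker] at hc ⊢
    rw [key, hc, mul_zero]
  -- Cayley-Hamilton for f
  have hCH : aeval f B.charpoly = 0 := by
    have h1 : aeval Bᵀ B.charpoly = 0 := by
      rw [← charpoly_transpose_aux B]
      exact Matrix.aeval_self_charpoly _
    have h2 : aeval f B.charpoly = Matrix.toLinAlgEquiv' (aeval Bᵀ B.charpoly) :=
      Polynomial.aeval_algHom_apply (Matrix.toLinAlgEquiv' : _ ≃ₐ[ℚ] _) Bᵀ _
    rw [h2, h1, map_zero]
  -- main claim: ker φ = ⊥
  rw [Fintype.linearIndependent_iff]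
  intro g hg
  by_contra hne
  push_neg at hne
  obtain ⟨i₀, hi₀⟩ := hne
  have hgne : g ≠ 0 := fun h => hi₀ (by simp [h])
  have hgker : g ∈ LinearMap.ker φ := by
    rw [LinearMap.mem_ker, hφ]
    rw [← hg]
    apply Finset.sum_congr rfl
    intro i _
    rw [Rat.smul_def]
  -- annihilator ideal of g
  let I : Ideal ℚ[X] :=
    { carrier := {p | (aeval f p) g = 0}
      add_mem' := by
        intro p q hp hq
        simp only [Set.mem_setOf_eq, map_add, LinearMap.add_apply] at *
        rw [hp, hq, add_zero]
      zero_mem' := by simp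
      smul_mem' := by
        intro q p hp
        simp only [Set.mem_setOf_eq] at *
        rw [smul_eq_mul, _root_.map_mul, Module.End.mul_apply, hp, map_zero] }
  have hmemI : ∀ p : ℚ[X], p ∈ I ↔ (aeval f p) g = 0 := fun _ => Iff.rfl
  have hchI : B.charpoly ∈ I := by rw [hmemI, hCH]; rfl
  have hInetop : I ≠ ⊤ := by
    intro htop
    have h1 : (1 : ℚ[X]) ∈ I := htop ▸ Submodule.mem_top
    rw [hmemI] at h1
    simp at h1
    exact hgne h1
  have hmax : (Ideal.span {B.charpoly}).IsMaximal :=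
    PrincipalIdealRing.isMaximal_of_irreducible hirr
  have hIeq : I = Ideal.span {B.charpoly} := by
    refine (hmax.eq_of_le hInetop ?_).symm
    rw [Ideal.span_le, Set.singleton_subset_iff]
    exact hchI
  have hdeg : B.charpoly.natDegree = m := by
    rw [Matrix.charpoly_natDegree_eq_dim, Fintype.card_fin]
  -- powers of f applied to g are linearly independent
  have hli : LinearIndependent ℚ (fun k : Fin m => (f ^ (k : ℕ)) g) := by
    rw [Fintype.linearIndependent_iff]
    intro a ha
    by_contra hane
    push_neg at hane
    obtain ⟨k₀, hk₀⟩ := hane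
    set p : ℚ[X] := ∑ k : Fin m, Polynomial.monomial (k : ℕ) (a k) with hpdef
    have hpne : p ≠ 0 := by
      intro hp0
      apply hk₀
      have : p.coeff (k₀ : ℕ) = a k₀ := by
        rw [hpdef, Polynomial.finset_sum_coeff]
        rw [Finset.sum_eq_single k₀]
        · simp
        · intro b _ hb
          rw [Polynomial.coeff_monomial, if_neg]
          exact fun h => hb (Fin.val_injective h)
        · simp
      rw [← this, hp0, Polynomial.coeff_zero]
    have hpI : p ∈ I := by
      rw [hmemI, hpdef]
      rw [map_sum]
      have : ∀ k : Fin m, (aeval f (Polynomial.monomial (k : ℕ) (a k))) g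
          = a k • ((f ^ (k : ℕ)) g) := by
        intro k
        rw [Polynomial.aeval_monomial]
        simp [Algebra.algebraMap_eq_smul_one, Module.End.mul_apply]
      rw [LinearMap.coe_sum, Finset.sum_apply]
      rw [Finset.sum_congr rfl (fun k _ => this k)]
      exact ha
    rw [hIeq, Ideal.mem_span_singleton] at hpI
    have hdegp : p.degree < B.charpoly.degree := by
      have h1 : p.degree < (m : WithBot ℕ) := by
        rw [hpdef]
        apply lt_of_le_of_lt (Polynomial.degree_sum_le _ _)
        rw [Finset.sup_lt_iff (by exact_mod_cast WithBot.bot_lt_coe m)]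
        intro k _
        apply lt_of_le_of_lt (Polynomial.degree_monomial_le _ _)
        exact_mod_cast k.isLt
      have h2 : B.charpoly.degree = (m : WithBot ℕ) := by
        rw [Polynomial.degree_eq_natDegree (Matrix.charpoly_monic B).ne_zero, hdeg]
      rw [h2]; exact h1
    exact hpne (Polynomial.eq_zero_of_dvd_of_degree_lt hpI hdegp)
  -- they span everything
  have hsp : Submodule.span ℚ (Set.range fun k : Fin m => (f ^ (k : ℕ)) g) = ⊤ := by
    apply hli.span_eq_top_of_card_eq_finrank'
    simp [Module.finrank_fintype_fun_eq_card]
  -- but they all lie in ker φ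
  have hpow : ∀ n : ℕ, (f ^ n) g ∈ LinearMap.ker φ := by
    intro n
    induction n with
    | zero => simpa using hgker
    | succ n ih =>
        rw [pow_succ']
        exact hinv _ ih
  have hker : LinearMap.ker φ = ⊤ := by
    rw [← top_le_iff, ← hsp, Submodule.span_le]
    rintro _ ⟨k, rfl⟩
    exact hpow _
  -- hence v = 0, contradiction
  apply hv
  funext i
  have := LinearMap.mem_ker.mp (hker ▸ Submodule.mem_top (x := Pi.single i (1:ℚ)))
  rw [hφ] at this
  simpa [Pi.single_apply, apply_ite (Rat.cast : ℚ → ℂ)] using this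
end

section
/- Let A be an m×m integer matrix with irreducible characteristic polynomial, and let α be an eigenvalue with conjugates α₁,…,α_m. If v ∈ ℚ(α)^m is an eigenvector for α and τ_i : ℚ(α) → ℂ are the m distinct field embeddings, then the matrix B = (τ_i(v_j))_{i,j} is invertible. -/
/-! Each embedding `τ i` carries the eigenvector `v` of `A` for `α` to an eigenvector `τ i ∘ v` of
`A` over `ℂ` for `τ i α`, which is the `i`-th row of `B`. Since `K = ℚ(α)`, an embedding is
determined by the image of `α`, so distinct embeddings give distinct eigenvalues `τ i α`, and
eigenvectors for distinct eigenvalues are linearly independent. -/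

open Matrix

theorem Matrix.map_algebraMap_int_mulVec_comp_eq_smul {R S n : Type*} [CommRing R] [CommRing S]
    [Fintype n] (f : R →+* S) (A : Matrix n n ℤ) {a : R} {v : n → R}
    (h : A.map (algebraMap ℤ R) *ᵥ v = a • v) :
    A.map (algebraMap ℤ S) *ᵥ (f ∘ v) = f a • (f ∘ v) := by
  ext i
  have hi := congrArg f (congrFun h i)
  rw [RingHom.map_mulVec, Matrix.map_map, ← RingHom.coe_comp,
    RingHom.ext_int (f.comp (algebraMap ℤ R)) (algebraMap ℤ S)] at hi
  simpa using hi

theorem Matrix.linearIndependent_of_mulVec_eq_smul {R n ι : Type*} [CommRing R] [IsDomain R]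
    [Fintype n] (M : Matrix n n R) {μ : ι → R} (hμ : Function.Injective μ) {w : ι → n → R}
    (hw : ∀ i, M *ᵥ w i = μ i • w i) (hw₀ : ∀ i, w i ≠ 0) : LinearIndependent R w :=
  Module.End.eigenvectors_linearIndependent' M.mulVecLin μ hμ w
    fun i => ⟨Module.End.mem_eigenspace_iff.mpr (hw i), hw₀ i⟩

theorem stmt_1_general {m : ℕ} (A : Matrix (Fin m) (Fin m) ℤ)
    (K : Type*) [Field K] [Algebra ℚ K]
    (α : K) (hK : Algebra.adjoin ℚ ({α} : Set K) = ⊤)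
    (v : Fin m → K) (hv : v ≠ 0)
    (heig : (A.map (algebraMap ℤ K)).mulVec v = α • v)
    (τ : Fin m → (K →ₐ[ℚ] ℂ)) (hτ : Function.Injective τ) :
    IsUnit (Matrix.of (fun i j => τ i (v j)) : Matrix (Fin m) (Fin m) ℂ) := by
  have hτα : Function.Injective fun i => τ i α := fun i j hij =>
    hτ <| AlgHom.ext_of_adjoin_eq_top hK fun x hx => by
      rw [Set.mem_singleton_iff.mp hx]
      exact hij
  rw [← Matrix.linearIndependent_rows_iff_isUnit]
  refine linearIndependent_of_mulVec_eq_smul (A.map (algebraMap ℤ ℂ)) hτα (fun i => ?_) fun i => ?_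
  · exact map_algebraMap_int_mulVec_comp_eq_smul (τ i : K →+* ℂ) A heig
  · have hinj : Function.Injective (τ i ∘ · : (Fin m → K) → Fin m → ℂ) :=
      (τ i).injective.comp_left
    exact fun h => hv (hinj (h.trans (by ext; simp)))

/-- If `A` is an integer matrix with irreducible characteristic polynomial,
`K = ℚ(α)` for an eigenvalue `α`, `v ∈ K^m` an eigenvector for `α`,
and `τ i` are the `m` distinct embeddings of `K` into `ℂ`, then the
matrix `B = (τ i (v j))` is invertible. -/
theorem stmt_1 {m : ℕ} (A : Matrix (Fin m) (Fin m) ℤ)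
    (hirr : Irreducible ((A.map (Int.cast : ℤ → ℚ)).charpoly))
    (K : Type*) [Field K] [Algebra ℚ K]
    (α : K) (hK : Algebra.adjoin ℚ ({α} : Set K) = ⊤)
    (hα : Polynomial.aeval α ((A.map (Int.cast : ℤ → ℚ)).charpoly) = 0)
    (v : Fin m → K) (hv : v ≠ 0)
    (heig : (A.map (algebraMap ℤ K)).mulVec v = α • v)
    (τ : Fin m → (K →ₐ[ℚ] ℂ)) (hτ : Function.Injective τ) :
    IsUnit (Matrix.of (fun i j => τ i (v j)) : Matrix (Fin m) (Fin m) ℂ) :=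
  stmt_1_general A K α hK v hv heig τ hτ
end

section
/- Let Q be an invertible linear map of ℝ^d, Λ ⊆ ℝ^d, and suppose Q(Λ − Λ) ⊆ Λ − Λ and there exist L ∈ ℕ, η ∈ ℝ^d with Q^L(Λ − Λ) ⊆ Λ − η. Then the set 𝒢 = ⋃_{k≥0} Q^{−k}(Λ − Λ) of eventual return vectors is closed under subtraction, i.e. 𝒢 − 𝒢 ⊆ 𝒢; in particular if 0 ∈ Λ − Λ then 𝒢 is an additive subgroup of ℝ^d. -/
/-!
Powers of `Q` keep `Λ - Λ` inside itself, so two eventual return vectors `x`, `y` return at a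
common time `n`. Algebraic coincidence then sends both `Qⁿ x` and `Qⁿ y` into the translate
`Λ - η` by `Q^L`, and the common shift `η` cancels in the difference:
`Q^(n+L) (x - y) = (a - η) - (b - η) = a - b ∈ Λ - Λ`.
-/

open scoped Pointwise
open Set

section EventualReturn

variable {R V : Type*} [Semiring R] [AddCommGroup V] [Module R V]

def eventualReturnSet (Q : Module.End R V) (S : Set V) : Set V :=
  ⋃ k : ℕ, (Q ^ k) ⁻¹' S

variable {Q : Module.End R V} {S : Set V}

lemma mapsTo_pow (h : MapsTo Q S S) (k : ℕ) : MapsTo (Q ^ k) S S := by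
  rw [Module.End.coe_pow]
  exact h.iterate k

lemma pow_apply_mem_of_le (h : MapsTo Q S S) {x : V} {j n : ℕ} (hjn : j ≤ n)
    (hx : (Q ^ j) x ∈ S) : (Q ^ n) x ∈ S := by
  obtain ⟨m, rfl⟩ := Nat.exists_eq_add_of_le hjn
  rw [add_comm, pow_add, Module.End.mul_apply]
  exact mapsTo_pow h m hx

lemma exists_pow_mem_of_mem_eventualReturnSet (h : MapsTo Q S S) {x y : V}
    (hx : x ∈ eventualReturnSet Q S) (hy : y ∈ eventualReturnSet Q S) :
    ∃ n : ℕ, (Q ^ n) x ∈ S ∧ (Q ^ n) y ∈ S := by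
  obtain ⟨j, hj⟩ := mem_iUnion.1 hx
  obtain ⟨k, hk⟩ := mem_iUnion.1 hy
  exact ⟨max j k, pow_apply_mem_of_le h (le_max_left j k) hj,
    pow_apply_mem_of_le h (le_max_right j k) hk⟩

lemma apply_sub_mem_sub_of_mapsTo_translate {f : Module.End R V} {Λ : Set V} {η : V}
    (hf : MapsTo f (Λ - Λ) ((· - η) '' Λ)) {u v : V} (hu : u ∈ Λ - Λ) (hv : v ∈ Λ - Λ) :
    f (u - v) ∈ Λ - Λ := by
  obtain ⟨a, ha, hau⟩ := hf hu
  obtain ⟨b, hb, hbv⟩ := hf hv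
  rw [map_sub, ← hau, ← hbv, sub_sub_sub_cancel_right]
  exact sub_mem_sub ha hb

theorem eventualReturnSet_sub_subset {Λ : Set V} {L : ℕ} {η : V}
    (hinv : MapsTo Q (Λ - Λ) (Λ - Λ)) (hcoin : MapsTo (Q ^ L) (Λ - Λ) ((· - η) '' Λ)) :
    eventualReturnSet Q (Λ - Λ) - eventualReturnSet Q (Λ - Λ) ⊆
      eventualReturnSet Q (Λ - Λ) := by
  rintro _ ⟨x, hx, y, hy, rfl⟩
  obtain ⟨n, hxn, hyn⟩ := exists_pow_mem_of_mem_eventualReturnSet hinv hx hy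
  refine mem_iUnion.2 ⟨L + n, ?_⟩
  rw [mem_preimage, pow_add, Module.End.mul_apply, map_sub]
  exact apply_sub_mem_sub_of_mapsTo_translate hcoin hxn hyn

lemma zero_mem_eventualReturnSet (h0 : (0 : V) ∈ S) : (0 : V) ∈ eventualReturnSet Q S :=
  mem_iUnion.2 ⟨0, by simpa using h0⟩

end EventualReturn

theorem stmt_5_general {d : ℕ} (Q : Module.End ℝ (Fin d → ℝ))
    (Λ : Set (Fin d → ℝ))
    (hinv : Q '' (Λ - Λ) ⊆ Λ - Λ)
    (hcoin : ∃ (L : ℕ) (η : Fin d → ℝ),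
      (Q ^ L) '' (Λ - Λ) ⊆ (fun x => x - η) '' Λ) :
    (⋃ k : ℕ, (Q ^ k) ⁻¹' (Λ - Λ)) - (⋃ k : ℕ, (Q ^ k) ⁻¹' (Λ - Λ)) ⊆
        (⋃ k : ℕ, (Q ^ k) ⁻¹' (Λ - Λ)) ∧
      ((0 : Fin d → ℝ) ∈ Λ - Λ →
        ∃ H : AddSubgroup (Fin d → ℝ),
          (H : Set (Fin d → ℝ)) = ⋃ k : ℕ, (Q ^ k) ⁻¹' (Λ - Λ)) := by
  obtain ⟨L, η, hL⟩ := hcoin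
  have hsub : eventualReturnSet Q (Λ - Λ) - eventualReturnSet Q (Λ - Λ) ⊆
      eventualReturnSet Q (Λ - Λ) :=
    eventualReturnSet_sub_subset (mapsTo_iff_image_subset.2 hinv)
      (mapsTo_iff_image_subset.2 hL)
  exact ⟨hsub, fun h0 => ⟨AddSubgroup.ofSub _ ⟨0, zero_mem_eventualReturnSet h0⟩
    fun x hx y hy => hsub (sub_mem_sub hx hy), rfl⟩⟩

/-- Under invariance and algebraic coincidence, the set of eventual return
vectors `𝒢 = ⋃ k, Q^{-k}(Λ - Λ)` is closed under subtraction; in particular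
if `0 ∈ Λ - Λ` it is an additive subgroup of `ℝ^d`. -/
theorem stmt_5 {d : ℕ} (Q : Module.End ℝ (Fin d → ℝ))
    (hQ : Function.Bijective Q) (Λ : Set (Fin d → ℝ)) (hΛ : Λ.Nonempty)
    (hinv : Q '' (Λ - Λ) ⊆ Λ - Λ)
    (hcoin : ∃ (L : ℕ) (η : Fin d → ℝ),
      (Q ^ L) '' (Λ - Λ) ⊆ (fun x => x - η) '' Λ) :
    (⋃ k : ℕ, (Q ^ k) ⁻¹' (Λ - Λ)) - (⋃ k : ℕ, (Q ^ k) ⁻¹' (Λ - Λ)) ⊆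
        (⋃ k : ℕ, (Q ^ k) ⁻¹' (Λ - Λ)) ∧
      ((0 : Fin d → ℝ) ∈ Λ - Λ →
        ∃ H : AddSubgroup (Fin d → ℝ),
          (H : Set (Fin d → ℝ)) = ⋃ k : ℕ, (Q ^ k) ⁻¹' (Λ - Λ)) :=
  stmt_5_general Q Λ hinv hcoin
end

section
/- Every element of the Thue–Morse set Λ₁ = { n ∈ ℕ : s(n) odd } can be written as a difference of two elements of Λ₀ = { n ∈ ℕ : s(n) even }, where s(n) is the binary digit sum of n. -/
/-!
Write `s` for the binary digit sum. Since `s (2 ^ j * n) = s n`, it suffices to treat odd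
`a = 2 * m + 1`, for which `s m` is even. Take `k = 2 * m + 1`, so that `2 * m < 2 ^ k`, and
`c = (2 ^ k - 1) + 2 ^ k * 2`, `b = 2 * m + 2 ^ k * 3`. The two summands of each occupy disjoint
binary digits, hence `s c = k + 1` and `s b = s m + 2` are both even, while `b - c = 2 * m + 1`.
-/

namespace Nat

theorem digits_sum_add_base_pow_mul {b k d : ℕ} (hb : 1 < b) (hd : d < b ^ k) (n : ℕ) :
    (digits b (d + b ^ k * n)).sum = (digits b d).sum + (digits b n).sum := by
  rcases Nat.eq_zero_or_pos n with rfl | hn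
  · simp
  obtain ⟨j, hk⟩ := Nat.exists_eq_add_of_le ((digits_length_le_iff hb d).2 hd)
  rw [hk, ← digits_append_zeroes_append_digits hb hn]
  simp

theorem digits_sum_base_pow_mul {b : ℕ} (hb : 1 < b) (k n : ℕ) :
    (digits b (b ^ k * n)).sum = (digits b n).sum := by
  simpa using digits_sum_add_base_pow_mul hb (pow_pos (zero_lt_of_lt hb) k) n

theorem digits_sum_base_pow_sub_one {b : ℕ} (hb : 1 < b) (k : ℕ) :
    (digits b (b ^ k - 1)).sum = k * (b - 1) := by
  induction k with
  | zero => simp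
  | succ k ih =>
    have hpos : 0 < b ^ k := pow_pos (zero_lt_of_lt hb) k
    have hsplit : b ^ (k + 1) - 1 = (b - 1) + b ^ 1 * (b ^ k - 1) := by
      rw [pow_succ', pow_one, Nat.mul_sub_one]
      have : b ≤ b * b ^ k := Nat.le_mul_of_pos_right b hpos
      omega
    rw [hsplit, digits_sum_add_base_pow_mul hb (by rw [pow_one]; omega), ih,
      digits_of_lt b (b - 1) (by omega) (by omega)]
    simp only [List.sum_cons, List.sum_nil]
    ring

end Nat

open Nat

theorem exists_sub_eq_two_mul_add_one_of_digits_sum_even {m : ℕ}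
    (hm : (digits 2 m).sum % 2 = 0) :
    ∃ b c : ℕ, (digits 2 b).sum % 2 = 0 ∧ (digits 2 c).sum % 2 = 0 ∧ b = c + (2 * m + 1) := by
  set k := 2 * m + 1
  have hk : 2 * m < 2 ^ k := lt_of_le_of_lt (Nat.le_succ _) Nat.lt_two_pow_self
  have hb : (digits 2 (2 * m + 2 ^ k * 3)).sum = (digits 2 m).sum + 2 := by
    have h2m : (digits 2 (2 * m)).sum = (digits 2 m).sum := by
      simpa using digits_sum_base_pow_mul one_lt_two 1 m
    rw [digits_sum_add_base_pow_mul one_lt_two hk, h2m]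
    norm_num
  have hc : (digits 2 ((2 ^ k - 1) + 2 ^ k * 2)).sum = k + 1 := by
    rw [digits_sum_add_base_pow_mul one_lt_two (Nat.sub_lt (by positivity) one_pos),
      digits_sum_base_pow_sub_one one_lt_two]
    norm_num
  refine ⟨2 * m + 2 ^ k * 3, (2 ^ k - 1) + 2 ^ k * 2, by omega, by omega, ?_⟩
  have : 1 ≤ 2 ^ k := Nat.one_le_two_pow
  omega

theorem exists_sub_eq_of_digits_sum_odd {a : ℕ} (ha : (digits 2 a).sum % 2 = 1) :
    ∃ b c : ℕ, (digits 2 b).sum % 2 = 0 ∧ (digits 2 c).sum % 2 = 0 ∧ b = c + a := by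
  have ha0 : a ≠ 0 := by rintro rfl; simp at ha
  obtain ⟨j, _, ⟨m, rfl⟩, rfl⟩ := exists_eq_two_pow_mul_odd ha0
  have hm : (digits 2 m).sum % 2 = 0 := by
    have hodd : (digits 2 (1 + 2 * m)).sum = 1 + (digits 2 m).sum := by
      simpa using digits_sum_add_base_pow_mul one_lt_two (k := 1) (d := 1) one_lt_two m
    rw [digits_sum_base_pow_mul one_lt_two, add_comm, hodd] at ha
    omega
  obtain ⟨_, c, hb, hc, rfl⟩ := exists_sub_eq_two_mul_add_one_of_digits_sum_even hm
  refine ⟨2 ^ j * (c + (2 * m + 1)), 2 ^ j * c, ?_, ?_, mul_add _ _ _⟩ <;>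
    rwa [digits_sum_base_pow_mul one_lt_two]

/-- Every element of `Λ₁ = {n : s(n) odd}` is a difference of two elements of
`Λ₀ = {n : s(n) even}`, where `s` is the binary digit sum. -/
theorem stmt_7 (a : ℕ) (ha : (Nat.digits 2 a).sum % 2 = 1) :
    ∃ b c : ℕ, (Nat.digits 2 b).sum % 2 = 0 ∧ (Nat.digits 2 c).sum % 2 = 0 ∧
      c ≤ b ∧ (a : ℤ) = (b : ℤ) - (c : ℤ) := by
  obtain ⟨b, c, hb, hc, rfl⟩ := exists_sub_eq_of_digits_sum_odd ha
  exact ⟨_, c, hb, hc, Nat.le_add_right c a, by push_cast; ring⟩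
end

section
/- Let Λ₀ = {n ∈ ℕ : s(n) even} where s is the binary digit sum. Then the set 𝒢 = ⋃_{k≥0} 2^{−k}(Λ₀ − Λ₀) of eventual return vectors for the Thue–Morse suspension equals ℤ[1/2], the ring of dyadic rationals. -/
lemma s_two_mul (n : ℕ) : (Nat.digits 2 (2*n)).sum = (Nat.digits 2 n).sum := by
  rcases Nat.eq_zero_or_pos n with h | h
  · simp [h]
  · rw [Nat.digits_def' (by norm_num : (1:ℕ) < 2) (by omega)]
    have h1 : 2 * n % 2 = 0 := by omega
    have h2 : 2 * n / 2 = n := by omega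
    rw [h1, h2]; simp

lemma s_two_mul_add_one (n : ℕ) :
    (Nat.digits 2 (2*n+1)).sum = (Nat.digits 2 n).sum + 1 := by
  rw [Nat.digits_def' (by norm_num : (1:ℕ) < 2) (by omega)]
  have h1 : (2 * n + 1) % 2 = 1 := by omega
  have h2 : (2 * n + 1) / 2 = n := by omega
  rw [h1, h2]; simp [List.sum_cons]; omega

lemma key : ∀ m : ℕ, 1 ≤ m → ∀ p q : ℕ, p < 2 → q < 2 →
    ∃ b : ℕ, (Nat.digits 2 b).sum % 2 = q ∧ (Nat.digits 2 (m + b)).sum % 2 = p := by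
  intro m
  induction m using Nat.strong_induction_on with
  | _ m ih =>
    intro hm p q hp hq
    rcases eq_or_lt_of_le hm with h1 | h2
    · have hm1 : m = 1 := h1.symm
      subst hm1
      interval_cases p <;> interval_cases q
      · exact ⟨5, by simp [Nat.digits_def'], by norm_num [Nat.digits_def']⟩
      · exact ⟨2, by simp [Nat.digits_def'], by norm_num [Nat.digits_def']⟩
      · exact ⟨3, by simp [Nat.digits_def'], by norm_num [Nat.digits_def']⟩
      · exact ⟨1, by simp [Nat.digits_def'], by norm_num [Nat.digits_def']⟩
    · rcases Nat.even_or_odd m with ⟨m', hm'⟩ | ⟨m', hm'⟩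
      · -- m = 2*m'
        have hm'1 : 1 ≤ m' := by omega
        obtain ⟨b', hb1, hb2⟩ := ih m' (by omega) hm'1 p q hp hq
        refine ⟨2*b', ?_, ?_⟩
        · rw [s_two_mul]; exact hb1
        · have : m + 2*b' = 2*(m' + b') := by omega
          rw [this, s_two_mul]; exact hb2
      · -- m = 2*m'+1
        have hm'1 : 1 ≤ m' := by omega
        obtain ⟨b', hb1, hb2⟩ := ih m' (by omega) hm'1 ((p+1) % 2) q
          (Nat.mod_lt _ (by norm_num)) hq
        refine ⟨2*b', ?_, ?_⟩
        · rw [s_two_mul]; exact hb1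
        · have : m + 2*b' = 2*(m' + b') + 1 := by omega
          rw [this, s_two_mul_add_one]; omega

lemma key_int (d : ℤ) : ∃ a b : ℕ, (Nat.digits 2 a).sum % 2 = 0 ∧
    (Nat.digits 2 b).sum % 2 = 0 ∧ (a : ℤ) - (b : ℤ) = d := by
  rcases lt_trichotomy d 0 with h | h | h
  · obtain ⟨b, hb1, hb2⟩ := key (-d).toNat (by omega) 0 0 (by norm_num) (by norm_num)
    exact ⟨b, (-d).toNat + b, hb1, hb2, by push_cast; omega⟩
  · exact ⟨0, 0, by simp, by simp, by simp [h]⟩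
  · obtain ⟨b, hb1, hb2⟩ := key d.toNat (by omega) 0 0 (by norm_num) (by norm_num)
    exact ⟨d.toNat + b, b, hb2, hb1, by push_cast; omega⟩

/-- The set `𝒢 = ⋃ k, 2^{-k}(Λ₀ - Λ₀)` of eventual return vectors for the
Thue–Morse suspension equals the ring of dyadic rationals `ℤ[1/2] ⊆ ℝ`. -/
theorem stmt_8 :
    (⋃ k : ℕ, {x : ℝ | ∃ a b : ℕ, (Nat.digits 2 a).sum % 2 = 0 ∧
        (Nat.digits 2 b).sum % 2 = 0 ∧ (2 : ℝ) ^ k * x = (a : ℝ) - (b : ℝ)}) =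
      {x : ℝ | ∃ (a : ℤ) (k : ℕ), x = (a : ℝ) / 2 ^ k} := by
  ext x
  simp only [Set.mem_iUnion, Set.mem_setOf_eq]
  constructor
  · rintro ⟨k, a, b, ha, hb, h⟩
    refine ⟨(a : ℤ) - b, k, ?_⟩
    have h2 : (2 : ℝ) ^ k ≠ 0 := by positivity
    push_cast
    field_simp
    linarith [h]
  · rintro ⟨a, k, rfl⟩
    obtain ⟨A, B, hA, hB, hAB⟩ := key_int a
    refine ⟨k, A, B, hA, hB, ?_⟩
    have h2 : (2 : ℝ) ^ k ≠ 0 := by positivity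
    have : ((A : ℤ) - B : ℝ) = (a : ℝ) := by exact_mod_cast congrArg (Int.cast : ℤ → ℝ) hAB
    push_cast at this
    field_simp
    linarith [this]
end
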